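/- For all integers p, t with 1 ≤ p ≤ t, one has Σ_{n=1}^{p} Σ_{m=0}^{t−p} 1/(m+n) = 2(σ_t − σ_{p−1} − σ_{t−p}), where σ_k denotes the k-th Stoll number. -/

import Mathlib

/-!
Writing `H_k` for the harmonic numbers, `2σ_k = H_1 + ⋯ + H_k`, so `2(σ_{k+1} - σ_k) = H_{k+1}`
and, thanks to `σ_0 = 0`, also `2(σ_k - σ_{k-1}) = H_k` with truncated subtraction. The inner sum
telescopes to `H_{n+b} - H_{n-1}`, and induction on the number `p` of outer terms finishes the
proof.
-/

/-- The `p`-th Stoll number `σ_p := (1/2) Σ_{k=1}^{p} Σ_{m=1}^{k} 1/m`. -/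
noncomputable def stoll (p : ℕ) : ℝ :=
  (1 / 2) * ∑ k ∈ Finset.Icc 1 p, ∑ m ∈ Finset.Icc 1 k, (1 : ℝ) / (m : ℝ)

open Finset

lemma two_mul_stoll (k : ℕ) : 2 * stoll k = ∑ j ∈ Icc 1 k, (harmonic j : ℝ) := by
  simp only [stoll, harmonic_eq_sum_Icc, Rat.cast_sum, Rat.cast_inv, Rat.cast_natCast, one_div]
  ring

lemma two_mul_stoll_succ_sub (k : ℕ) : 2 * (stoll (k + 1) - stoll k) = harmonic (k + 1) := by
  rw [mul_sub, two_mul_stoll, two_mul_stoll, sum_Icc_succ_top (by omega), add_sub_cancel_left]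

lemma two_mul_stoll_sub_pred (k : ℕ) : 2 * (stoll k - stoll (k - 1)) = harmonic k := by
  cases k with
  | zero => simp
  | succ k => exact two_mul_stoll_succ_sub k

lemma sum_range_one_div_add (n b : ℕ) :
    ∑ m ∈ range b, (1 : ℝ) / ((m : ℝ) + (n + 1)) = harmonic (n + b) - harmonic n := by
  induction b with
  | zero => simp
  | succ b ih =>
    rw [sum_range_succ, ih, ← Nat.add_assoc, harmonic_succ]
    push_cast
    ring

lemma sum_Icc_sum_range_one_div_add (p b : ℕ) :
    ∑ n ∈ Icc 1 p, ∑ m ∈ range (b + 1), (1 : ℝ) / ((m : ℝ) + (n : ℝ)) =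
      2 * (stoll (p + b) - stoll (p - 1) - stoll b) := by
  induction p with
  | zero => simp [stoll]
  | succ p ih =>
    have hnew := two_mul_stoll_succ_sub (p + b)
    have hold := two_mul_stoll_sub_pred p
    rw [sum_Icc_succ_top (by omega), ih, Nat.cast_succ, sum_range_one_div_add,
      Nat.add_sub_cancel, Nat.add_right_comm p 1 b, ← add_assoc]
    linarith

theorem levine_harmonic_projection_coeff_general (p t : ℕ) (hpt : p ≤ t) :
    ∑ n ∈ Finset.Icc 1 p, ∑ m ∈ Finset.range (t - p + 1), (1 : ℝ) / ((m : ℝ) + (n : ℝ)) =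
      2 * (stoll t - stoll (p - 1) - stoll (t - p)) := by
  rw [sum_Icc_sum_range_one_div_add, Nat.add_sub_cancel' hpt]

/-- Equation (Levproj) of the paper: for `1 ≤ p ≤ t`,
`Σ_{n=1}^{p} Σ_{m=0}^{t−p} 1/(m+n) = 2(σ_t − σ_{p−1} − σ_{t−p})`. -/
theorem levine_harmonic_projection_coeff (p t : ℕ) (hp : 1 ≤ p) (hpt : p ≤ t) :
    ∑ n ∈ Finset.Icc 1 p, ∑ m ∈ Finset.range (t - p + 1), (1 : ℝ) / ((m : ℝ) + (n : ℝ)) =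
      2 * (stoll t - stoll (p - 1) - stoll (t - p)) :=
  levine_harmonic_projection_coeff_general p t hpt
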